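/- Let s ∈ (0,1), N > 4s, 2_s^* = 2N/(N−2s), and let c_{N,s} > 0 be a constant. Define U₁(x) = c_{N,s}(1+|x|²)^{−(N−2s)/2} and ψ(x) = (1−|x|²)(1+|x|²)^{−(N−2s+2)/2} on ℝ^N. Then for every t ∈ [2, 2_s^*], ∫_{ℝ^N} ψ(x) U₁(x)^{t−1} dx = (1/c_{N,s}) · ((−2N + (N−2s)t)/((N−2s)t)) · ∫_{ℝ^N} U₁(x)^t dx. -/

import Mathlib

open MeasureTheory Real Filter Set Topology Asymptotics
open scoped Classical

noncomputable section

/-- Euclidean space `ℝ^N`. -/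
abbrev RN (N : ℕ) := EuclideanSpace ℝ (Fin N)

/-- The critical fractional Sobolev exponent `2_s^* = 2N/(N-2s)`. -/
def critExp (N : ℕ) (s : ℝ) : ℝ := 2 * N / ((N : ℝ) - 2 * s)

/-- The squared Gagliardo seminorm `[u]_{H^s}²`. -/
def gagliardoSq (N : ℕ) (s : ℝ) (u : RN N → ℝ) : ℝ :=
  ∫ z : RN N × RN N, (u z.1 - u z.2) ^ 2 / ‖z.1 - z.2‖ ^ ((N : ℝ) + 2 * s)

/-- Membership in the fractional Sobolev space `H^s(ℝ^N)`: `u ∈ L²` and the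
Gagliardo seminorm is finite. -/
def MemHs (N : ℕ) (s : ℝ) (u : RN N → ℝ) : Prop :=
  Integrable (fun x : RN N => (u x) ^ 2) ∧
  Integrable (fun z : RN N × RN N => (u z.1 - u z.2) ^ 2 / ‖z.1 - z.2‖ ^ ((N : ℝ) + 2 * s))

/-- `‖u‖_r^r = ∫ |u|^r`. -/
def lpPow (N : ℕ) (r : ℝ) (u : RN N → ℝ) : ℝ := ∫ x : RN N, |u x| ^ r

/-- `u` is a weak solution of `(-Δ)^s u + u = |u|^{p-2}u + λ|u|^{q-2}u` in `ℝ^N`. -/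
def IsWeakSolution (N : ℕ) (s p q lam : ℝ) (u : RN N → ℝ) : Prop :=
  MemHs N s u ∧ ∀ φ : RN N → ℝ, MemHs N s φ →
    (∫ z : RN N × RN N, (u z.1 - u z.2) * (φ z.1 - φ z.2) / ‖z.1 - z.2‖ ^ ((N : ℝ) + 2 * s))
      + (∫ x : RN N, u x * φ x)
    = (∫ x : RN N, |u x| ^ (p - 2) * u x * φ x)
      + lam * ∫ x : RN N, |u x| ^ (q - 2) * u x * φ x

/-- The energy functional `I_λ`. -/
def energy (N : ℕ) (s p q lam : ℝ) (u : RN N → ℝ) : ℝ :=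
  (1 / 2) * gagliardoSq N s u + (1 / 2) * lpPow N 2 u
    - (1 / p) * lpPow N p u - (lam / q) * lpPow N q u

/-- `u` is a ground state solution of `(P_λ)`. -/
def IsGroundState (N : ℕ) (s p q lam : ℝ) (u : RN N → ℝ) : Prop :=
  IsWeakSolution N s p q lam u ∧ u ≠ 0 ∧
    energy N s p q lam u =
      sInf {E : ℝ | ∃ v : RN N → ℝ, IsWeakSolution N s p q lam v ∧ v ≠ 0 ∧ E = energy N s p q lam v}

/-- `u` is radially symmetric. -/
def IsRadial (N : ℕ) (u : RN N → ℝ) : Prop :=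
  ∃ f : ℝ → ℝ, ∀ x, u x = f ‖x‖

/-- `u` is radially symmetric and radially decreasing. -/
def IsRadialDecreasing (N : ℕ) (u : RN N → ℝ) : Prop :=
  ∃ f : ℝ → ℝ, (∀ x, u x = f ‖x‖) ∧ AntitoneOn f (Ici 0)

/-- `f(λ) ∼ g(λ)` for small `λ > 0`: two-sided comparison with positive constants. -/
def SimEq (f g : ℝ → ℝ) : Prop :=
  ∃ C₁ C₂ lam₀ : ℝ, 0 < C₁ ∧ 0 < C₂ ∧ 0 < lam₀ ∧
    ∀ lam : ℝ, 0 < lam → lam ≤ lam₀ → C₁ * g lam ≤ f lam ∧ f lam ≤ C₂ * g lam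

/-- `f(λ) ≲ g(λ)` for small `λ > 0`. -/
def LesssimEq (f g : ℝ → ℝ) : Prop :=
  ∃ C lam₀ : ℝ, 0 < C ∧ 0 < lam₀ ∧ ∀ lam : ℝ, 0 < lam → lam ≤ lam₀ → f lam ≤ C * g lam

/-- Squared `H^s` norm. -/
def hsNormSq (N : ℕ) (s : ℝ) (u : RN N → ℝ) : ℝ := lpPow N 2 u + gagliardoSq N s u

/-- The (extended-real-valued) Hölder norm of order `α`: sup norm plus Hölder seminorm. -/
def holderENorm (N : ℕ) (α : ℝ) (f : RN N → ℝ) : ENNReal :=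
  (⨆ x : RN N, (‖f x‖₊ : ENNReal)) +
    ⨆ x : RN N, ⨆ y : RN N,
      if x = y then 0 else (‖f x - f y‖₊ : ENNReal) / (‖x - y‖₊ : ENNReal) ^ α

/-- The Aubin–Talenti bubble `U₁(x) = c (1+|x|²)^{-(N-2s)/2}`. -/
def U1 (N : ℕ) (s c : ℝ) (x : RN N) : ℝ := c * (1 + ‖x‖ ^ 2) ^ (-(((N : ℝ) - 2 * s) / 2))

/-- The rescaled bubble `U_ρ(x) = ρ^{-(N-2s)/2} U₁(x/ρ)`. -/
def Urho (N : ℕ) (s c ρ : ℝ) (x : RN N) : ℝ :=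
  ρ ^ (-(((N : ℝ) - 2 * s) / 2)) * U1 N s c (ρ⁻¹ • x)

/-- `U₁` (with constant `c`) is a weak solution of the critical Emden–Fowler equation
`(-Δ)^s U = U^{2_s^*-1}` in `ℝ^N`. -/
def IsEmdenFowlerSolution (N : ℕ) (s c : ℝ) : Prop :=
  ∀ φ : RN N → ℝ, MemHs N s φ →
    (∫ z : RN N × RN N,
        (U1 N s c z.1 - U1 N s c z.2) * (φ z.1 - φ z.2) / ‖z.1 - z.2‖ ^ ((N : ℝ) + 2 * s))
      = ∫ x : RN N, |U1 N s c x| ^ (critExp N s - 2) * U1 N s c x * φ x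

/-- The rescaling `v(x) = λ^{1/(q-2)} u(λ^{(2_s^*-2)/(2s(q-2))} x)`. -/
def rescale (N : ℕ) (s q : ℝ) (u : RN N → ℝ) (lam : ℝ) : RN N → ℝ :=
  fun x => lam ^ (1 / (q - 2)) * u ((lam ^ ((critExp N s - 2) / (2 * s * (q - 2)))) • x)

/-- The rescaled energy functional `J_λ`, with `σ = (2_s^*-2)/(q-2)`. -/
def Jfun (N : ℕ) (s q lam : ℝ) (v : RN N → ℝ) : ℝ :=
  (1 / 2) * gagliardoSq N s v + (lam ^ ((critExp N s - 2) / (q - 2)) / 2) * lpPow N 2 v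
    - (1 / critExp N s) * lpPow N (critExp N s) v
    - (lam ^ ((critExp N s - 2) / (q - 2)) / q) * lpPow N q v

/-- `m_λ`: infimum of `J_λ` over the Nehari manifold `𝒩_λ`. -/
def mJ (N : ℕ) (s q lam : ℝ) : ℝ :=
  sInf {E : ℝ | ∃ v : RN N → ℝ, MemHs N s v ∧ v ≠ 0 ∧
    gagliardoSq N s v + lam ^ ((critExp N s - 2) / (q - 2)) * lpPow N 2 v
      = lpPow N (critExp N s) v + lam ^ ((critExp N s - 2) / (q - 2)) * lpPow N q v ∧
    E = Jfun N s q lam v}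

/-- `m₀`: infimum of `J₀(v) = ½[v]² - (1/2_s^*)‖v‖_{2_s^*}^{2_s^*}` over `𝒩₀`. -/
def mJ0 (N : ℕ) (s : ℝ) : ℝ :=
  sInf {E : ℝ | ∃ v : RN N → ℝ, MemHs N s v ∧ v ≠ 0 ∧
    gagliardoSq N s v = lpPow N (critExp N s) v ∧
    E = (1 / 2) * gagliardoSq N s v - (1 / critExp N s) * lpPow N (critExp N s) v}

/-- `m₀^*`: infimum of `I₀(v) = ½[v]² + ½‖v‖₂² - (1/2_s^*)‖v‖_{2_s^*}^{2_s^*}` over the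
Nehari manifold `[v]² + ‖v‖₂² = ‖v‖_{2_s^*}^{2_s^*}`. -/
def m0crit (N : ℕ) (s : ℝ) : ℝ :=
  sInf {E : ℝ | ∃ v : RN N → ℝ, MemHs N s v ∧ v ≠ 0 ∧
    gagliardoSq N s v + lpPow N 2 v = lpPow N (critExp N s) v ∧
    E = (1 / 2) * gagliardoSq N s v + (1 / 2) * lpPow N 2 v
        - (1 / critExp N s) * lpPow N (critExp N s) v}

/-- Infimum of `I_λ` over the Nehari manifold `[u]² + ‖u‖₂² = ‖u‖_p^p + λ‖u‖_q^q`
(subcritical setting); for `λ = 0` this is the Nehari level of the limit equation. -/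
def mSub (N : ℕ) (s p q lam : ℝ) : ℝ :=
  sInf {E : ℝ | ∃ v : RN N → ℝ, MemHs N s v ∧ v ≠ 0 ∧
    gagliardoSq N s v + lpPow N 2 v = lpPow N p v + lam * lpPow N q v ∧
    E = energy N s p q lam v}

/-- `Q(q) = ((2_s^*-q)/(2_s^*-2))^{(2_s^*-q)/(q-2)}`. -/
def Qfun (N : ℕ) (s q : ℝ) : ℝ :=
  ((critExp N s - q) / (critExp N s - 2)) ^ ((critExp N s - q) / (q - 2))

/-- `G(q) = ((q-2)/(2_s^*-2)) Q(q)`. -/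
def Gfun (N : ℕ) (s q : ℝ) : ℝ := ((q - 2) / (critExp N s - 2)) * Qfun N s q

lemma aux_int (n : ℕ) (b : ℝ) (hb : (n : ℝ) + 1 < 2 * b) :
    IntegrableOn (fun y : ℝ => y ^ n * (1 + y ^ 2) ^ (-b)) (Ioi (0 : ℝ)) := by
  have hcont : Continuous (fun y : ℝ => y ^ n * (1 + y ^ 2) ^ (-b)) := by
    apply Continuous.mul (continuous_pow n)
    apply Continuous.rpow_const (by continuity)
    intro y; left; positivity
  have h1 : IntegrableOn (fun y : ℝ => y ^ n * (1 + y ^ 2) ^ (-b)) (Ioc (0 : ℝ) 1) :=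
    (hcont.integrableOn_Icc (a := 0) (b := 1)).mono_set Ioc_subset_Icc_self
  have h2 : IntegrableOn (fun y : ℝ => y ^ n * (1 + y ^ 2) ^ (-b)) (Ioi (1 : ℝ)) := by
    refine (integrableOn_Ioi_rpow_of_lt (a := (n : ℝ) - 2 * b) (by linarith) one_pos).mono'
      (hcont.aestronglyMeasurable.restrict) ?_
    filter_upwards [ae_restrict_mem measurableSet_Ioi] with y (hy : 1 < y)
    have hy0 : 0 < y := lt_trans one_pos hy
    have hb0 : 0 ≤ b := by have := Nat.cast_nonneg (α := ℝ) n; linarith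
    have e1 : (1 + y ^ 2) ^ (-b) ≤ (y ^ 2) ^ (-b) :=
      rpow_le_rpow_of_nonpos (by positivity) (by linarith) (by linarith)
    have e2 : (y ^ 2 : ℝ) ^ (-b) = y ^ (-(2 * b)) := by
      rw [← Real.rpow_natCast y 2, ← Real.rpow_mul hy0.le]
      norm_num
    have : y ^ n * (1 + y ^ 2) ^ (-b) ≤ y ^ ((n : ℝ) - 2 * b) := by
      calc y ^ n * (1 + y ^ 2) ^ (-b) ≤ y ^ n * (y ^ 2) ^ (-b) := by
            apply mul_le_mul_of_nonneg_left e1 (by positivity)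
        _ = y ^ ((n : ℝ) - 2 * b) := by
            rw [e2, ← Real.rpow_natCast y n, ← Real.rpow_add hy0]; ring_nf
    rw [norm_of_nonneg (by positivity)]
    exact this
  have := h1.union h2
  rwa [Ioc_union_Ioi_eq_Ioi (zero_le_one)] at this

lemma radial_identity (n : ℕ) (hn : 1 ≤ n) (b : ℝ) (hb : (n : ℝ) < 2 * b) :
    ∫ y in Ioi (0 : ℝ), y ^ (n - 1) * ((1 - y ^ 2) * (1 + y ^ 2) ^ (-(b + 1)))
      = ((b - n) / b) * ∫ y in Ioi (0 : ℝ), y ^ (n - 1) * (1 + y ^ 2) ^ (-b) := by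
  have hn' : (0 : ℝ) < n := by exact_mod_cast hn
  have hb0 : 0 < b := by linarith
  set h : ℝ → ℝ := fun y => y ^ (n - 1) * (1 + y ^ 2) ^ (-b) with hh
  set k : ℝ → ℝ := fun y => y ^ (n + 1) * (1 + y ^ 2) ^ (-(b + 1)) with hk
  have hcast : ((n - 1 : ℕ) : ℝ) = (n : ℝ) - 1 := by
    rw [Nat.cast_sub hn]; norm_num
  have hInt : IntegrableOn h (Ioi (0 : ℝ)) := by
    apply aux_int; rw [hcast]; linarith
  have kInt : IntegrableOn k (Ioi (0 : ℝ)) := by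
    apply aux_int; push_cast; linarith
  set F : ℝ → ℝ := fun y => y ^ n * (1 + y ^ 2) ^ (-b) with hF
  set F' : ℝ → ℝ := fun y => (n : ℝ) * h y - 2 * b * k y with hF'
  -- pointwise facts
  have hpos : ∀ y : ℝ, (0 : ℝ) < 1 + y ^ 2 := fun y => by positivity
  have epow : ∀ y : ℝ, y ^ (n + 1) = y ^ (n - 1) * y ^ 2 := by
    intro y; rw [← pow_add]; congr 1; omega
  have erpow : ∀ y : ℝ, (1 + y ^ 2) ^ (-b) = (1 + y ^ 2) ^ (-(b + 1)) * (1 + y ^ 2) := by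
    intro y
    rw [← Real.rpow_add_one (hpos y).ne']
    norm_num
  have hderiv : ∀ y : ℝ, HasDerivAt F (F' y) y := by
    intro y
    have h2 : HasDerivAt (fun y : ℝ => 1 + y ^ 2) (2 * y) y := by
      simpa using (hasDerivAt_pow 2 y).const_add 1
    have h3 : HasDerivAt (fun y : ℝ => (1 + y ^ 2) ^ (-b))
        (2 * y * (-b) * (1 + y ^ 2) ^ (-b - 1)) y :=
      h2.rpow_const (Or.inl (hpos y).ne')
    have := (hasDerivAt_pow n y).mul h3
    convert this using 1
    · rfl
    · rfl
    · rfl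
    simp only [hF', hh, hk, epow]
    rw [show (-(b + 1) : ℝ) = -b - 1 by ring]
    have e4 : y ^ (n - 1) * y ^ 2 = y ^ n * y := by
      rw [← pow_add, ← pow_succ]; congr 1; omega
    rw [e4]; ring
  have F'int : IntegrableOn F' (Ioi (0 : ℝ)) :=
    (hInt.const_mul _).sub (kInt.const_mul _)
  have hzero : ∫ y in Ioi (0 : ℝ), F' y = 0 := by
    have hlim : Tendsto F atTop (𝓝 0) := by
      apply squeeze_zero' (g := fun y => y ^ ((n : ℝ) - 2 * b))
      · filter_upwards [eventually_ge_atTop (0 : ℝ)] with y hy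
        simp only [hF]; positivity
      · filter_upwards [eventually_ge_atTop (1 : ℝ)] with y hy
        have hy0 : (0 : ℝ) < y := lt_of_lt_of_le one_pos hy
        have e1 : (1 + y ^ 2) ^ (-b) ≤ (y ^ 2) ^ (-b) :=
          rpow_le_rpow_of_nonpos (by positivity) (by linarith) (by linarith)
        calc y ^ n * (1 + y ^ 2) ^ (-b) ≤ y ^ n * (y ^ 2) ^ (-b) :=
              mul_le_mul_of_nonneg_left e1 (by positivity)
          _ = y ^ ((n : ℝ) - 2 * b) := by
              have e2 : (y ^ 2 : ℝ) ^ (-b) = y ^ (-(2 * b)) := by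
                rw [← Real.rpow_natCast y 2, ← Real.rpow_mul hy0.le]
                norm_num
              rw [e2, ← Real.rpow_natCast y n, ← Real.rpow_add hy0]
              ring_nf
      · have : Tendsto (fun y : ℝ => y ^ (-(2 * b - (n : ℝ)))) atTop (𝓝 0) :=
          tendsto_rpow_neg_atTop (by linarith)
        convert this using 2 with y
        ring_nf
    have := integral_Ioi_of_hasDerivAt_of_tendsto
      (f := F) (f' := F') (a := 0) (m := 0)
      ((hderiv 0).continuousAt.continuousWithinAt)
      (fun y _ => hderiv y) F'int hlim
    rw [this, hF]
    simp [zero_pow (by omega : n ≠ 0)]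
  have hsplit : ∀ y : ℝ,
      y ^ (n - 1) * ((1 - y ^ 2) * (1 + y ^ 2) ^ (-(b + 1)))
        = (1 / b) * F' y + ((b - n) / b) * h y := by
    intro y
    simp only [hF', hh, hk, epow, erpow]
    field_simp
    ring
  calc ∫ y in Ioi (0 : ℝ), y ^ (n - 1) * ((1 - y ^ 2) * (1 + y ^ 2) ^ (-(b + 1)))
      = ∫ y in Ioi (0 : ℝ), ((1 / b) * F' y + ((b - n) / b) * h y) := by
        apply integral_congr_ae; filter_upwards with y; exact hsplit y
    _ = (1 / b) * (∫ y in Ioi (0 : ℝ), F' y) + ((b - n) / b) * ∫ y in Ioi (0 : ℝ), h y := by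
        rw [integral_add ((F'int.const_mul _)) (hInt.const_mul _),
          integral_const_mul, integral_const_mul]
    _ = ((b - n) / b) * ∫ y in Ioi (0 : ℝ), y ^ (n - 1) * (1 + y ^ 2) ^ (-b) := by
        rw [hzero, mul_zero, zero_add]

/-- Lemma A.1: a Beta-function identity.
With `U₁(x) = c(1+|x|²)^{-(N-2s)/2}` and `ψ(x) = (1-|x|²)(1+|x|²)^{-(N-2s+2)/2}`, for every
`t ∈ [2, 2_s^*]`:
`∫ ψ U₁^{t-1} = (1/c)((-2N+(N-2s)t)/((N-2s)t)) ∫ U₁^t`. -/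
theorem beta_function_identity
    (N : ℕ) (s c t : ℝ)
    (hs : s ∈ Set.Ioo (0 : ℝ) 1) (hN : 4 * s < (N : ℝ))
    (hc : 0 < c) (ht : 2 ≤ t) (ht' : t ≤ critExp N s) :
    ∫ x : RN N,
        ((1 - ‖x‖ ^ 2) * (1 + ‖x‖ ^ 2) ^ (-(((N : ℝ) - 2 * s + 2) / 2))) *
          (c * (1 + ‖x‖ ^ 2) ^ (-(((N : ℝ) - 2 * s) / 2))) ^ (t - 1)
      = (1 / c) * ((-2 * (N : ℝ) + ((N : ℝ) - 2 * s) * t) / (((N : ℝ) - 2 * s) * t)) *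
          ∫ x : RN N, (c * (1 + ‖x‖ ^ 2) ^ (-(((N : ℝ) - 2 * s) / 2))) ^ t := by
  obtain ⟨hs0, hs1⟩ := hs
  have hNpos : (0 : ℝ) < N := by linarith
  have hN0 : 0 < N := by exact_mod_cast hNpos
  have hN1 : 1 ≤ N := hN0
  have hA : (0 : ℝ) < (N : ℝ) - 2 * s := by linarith
  set A : ℝ := (N : ℝ) - 2 * s with hAdef
  set β : ℝ := A * t / 2 with hβdef
  have hβN : (N : ℝ) < 2 * β := by
    have h2 : ((N : ℝ) - 2 * s) * 2 ≤ ((N : ℝ) - 2 * s) * t :=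
      mul_le_mul_of_nonneg_left ht hA.le
    rw [hβdef, hAdef]; linarith
  have hβ0 : 0 < β := by linarith
  have hP : ∀ x : RN N, (0 : ℝ) < 1 + ‖x‖ ^ 2 := fun x => by positivity
  -- pointwise rewriting of the integrands
  have key1 : ∀ x : RN N,
      ((1 - ‖x‖ ^ 2) * (1 + ‖x‖ ^ 2) ^ (-((A + 2) / 2))) *
          (c * (1 + ‖x‖ ^ 2) ^ (-(A / 2))) ^ (t - 1)
        = c ^ (t - 1) * ((1 - ‖x‖ ^ 2) * (1 + ‖x‖ ^ 2) ^ (-(β + 1))) := by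
    intro x
    have hPx := hP x
    rw [Real.mul_rpow hc.le (Real.rpow_nonneg hPx.le _), ← Real.rpow_mul hPx.le]
    have e : (1 + ‖x‖ ^ 2) ^ (-((A + 2) / 2)) * (1 + ‖x‖ ^ 2) ^ (-(A / 2) * (t - 1))
        = (1 + ‖x‖ ^ 2) ^ (-(β + 1)) := by
      rw [← Real.rpow_add hPx]
      congr 1
      rw [hβdef]; ring
    rw [← e]; ring
  have key2 : ∀ x : RN N,
      (c * (1 + ‖x‖ ^ 2) ^ (-(A / 2))) ^ t = c ^ t * (1 + ‖x‖ ^ 2) ^ (-β) := by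
    intro x
    have hPx := hP x
    rw [Real.mul_rpow hc.le (Real.rpow_nonneg hPx.le _), ← Real.rpow_mul hPx.le]
    congr 1
    rw [hβdef]; ring
  have hexp : -(((N : ℝ) - 2 * s + 2) / 2) = -((A + 2) / 2) := by rw [hAdef]
  have hexp2 : -(((N : ℝ) - 2 * s) / 2) = -(A / 2) := by rw [hAdef]
  simp only [hexp, hexp2, key1, key2]
  rw [integral_const_mul, integral_const_mul]
  -- radial reduction
  haveI : Nonempty (Fin N) := ⟨⟨0, hN0⟩⟩
  haveI : Nontrivial (RN N) := inferInstance
  rw [MeasureTheory.integral_fun_norm_addHaar (volume : Measure (RN N))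
      (fun y : ℝ => (1 - y ^ 2) * (1 + y ^ 2) ^ (-(β + 1))),
    MeasureTheory.integral_fun_norm_addHaar (volume : Measure (RN N))
      (fun y : ℝ => (1 + y ^ 2) ^ (-β)),
    finrank_euclideanSpace_fin]
  simp only [smul_eq_mul, nsmul_eq_mul]
  rw [radial_identity N hN1 β hβN]
  have hct : c ^ t = c ^ (t - 1) * c := by
    rw [← Real.rpow_add_one hc.ne']; norm_num
  rw [hct, hβdef]
  have hAt : A * t ≠ 0 := by positivity
  field_simp
  ring
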